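/- arXiv:2210.06268 — 2 statements merged into one kernel-verified Lean document; each statement's English description precedes it below -/
import Mathlib

section
/- The manifest behavior with respect to the control variable c of the canonical distributed controller (the interconnection through the variables (s_i, k_i) of the local canonical controllers C_i^can = projection onto (c_i,s_i,k_i) of P_i interconnected with K_i through w_i) equals the projection onto c of the interconnection of the manifest plant behavior (P_I)_{(w,c)} with the desired manifest behavior (K_I)_w through w. -/
theorem statement1_general {ι : Type*}
    {W Cv : ι → Type*} {S K : Type*}
    (P : ∀ i, Set (W i × S × Cv i)) (Kb : ∀ i, Set (W i × K))
    (Ccan : ∀ i, Set (Cv i × S × K))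
    (hCcan : ∀ i, Ccan i =
      {x : Cv i × S × K | ∃ w : W i, (w, x.2.1, x.1) ∈ P i ∧ (w, x.2.2) ∈ Kb i}) :
    {c : ∀ i, Cv i | ∃ (s : S) (k : K), ∀ i, (c i, s, k) ∈ Ccan i} =
      {c : ∀ i, Cv i | ∃ w : ∀ i, W i,
        (∃ s : S, ∀ i, (w i, s, c i) ∈ P i) ∧ (∃ k : K, ∀ i, (w i, k) ∈ Kb i)} := by
  ext c
  -- The local witnesses `w i` glue into one `w : ∀ i, W i` by choice (`Classical.skolem`).
  simp only [Set.mem_ofPred_eq, hCcan, Classical.skolem, forall_and]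
  exact ⟨fun ⟨s, k, w, hs, hk⟩ => ⟨w, ⟨s, hs⟩, k, hk⟩,
    fun ⟨w, ⟨s, hs⟩, k, hk⟩ => ⟨s, k, w, hs, hk⟩⟩

/-- The manifest behavior with respect to `c` of the canonical distributed
controller (interconnection through `(s,k)` of the local canonical
controllers) equals the projection onto `c` of the interconnection of the
manifest plant behavior with the desired manifest behavior through `w`. -/
theorem statement1 {ι : Type*} [Fintype ι]
    {W Cv : ι → Type*} {S K : Type*}
    (P : ∀ i, Set (W i × S × Cv i)) (Kb : ∀ i, Set (W i × K))
    (Ccan : ∀ i, Set (Cv i × S × K))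
    (hCcan : ∀ i, Ccan i =
      {x : Cv i × S × K | ∃ w : W i, (w, x.2.1, x.1) ∈ P i ∧ (w, x.2.2) ∈ Kb i}) :
    {c : ∀ i, Cv i | ∃ (s : S) (k : K), ∀ i, (c i, s, k) ∈ Ccan i} =
      {c : ∀ i, Cv i | ∃ w : ∀ i, W i,
        (∃ s : S, ∀ i, (w i, s, c i) ∈ P i) ∧ (∃ k : K, ∀ i, (w i, k) ∈ Kb i)} :=
  statement1_general P Kb Ccan hCcan
end

section
/- Conversely, if the stacked matrix satisfies rank [A₁; B₁; A₂; B₂] = rank [A₁; B₁] + rank [A₂; B₂], then the plant-interconnection rank condition rank [[R₁,M₁,0,0,S₁],[0,0,R₂,M₂,S₂]] = rank [R₁ M₁ S₁] + rank [R₂ M₂ S₂] holds and the desired-behavior rank condition rank [[W₁,0,K₁],[0,W₂,K₂]] = rank [W₁ K₁] + rank [W₂ K₂] holds. -/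
open Matrix

noncomputable section

variable {w1 w2 c1 c2 sn kn g1 g2 h1 h2 : ℕ}

abbrev RF := RatFunc ℝ

/-- `A₁ = [M₁ 0 S₁ 0 R₁ 0]` with column blocks `(c₁, c₂, s, k, w₁, w₂)`. -/
def rowA1 (M1 : Matrix (Fin g1) (Fin c1) RF) (S1 : Matrix (Fin g1) (Fin sn) RF)
    (R1 : Matrix (Fin g1) (Fin w1) RF) :
    Matrix (Fin g1) (Fin c1 ⊕ Fin c2 ⊕ Fin sn ⊕ Fin kn ⊕ Fin w1 ⊕ Fin w2) RF :=
  Matrix.of fun i =>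
    Sum.elim (M1 i) (Sum.elim 0 (Sum.elim (S1 i) (Sum.elim 0 (Sum.elim (R1 i) 0))))

/-- `B₁ = [0 0 0 K₁ W₁ 0]` with column blocks `(c₁, c₂, s, k, w₁, w₂)`. -/
def rowB1 (K1 : Matrix (Fin h1) (Fin kn) RF) (W1 : Matrix (Fin h1) (Fin w1) RF) :
    Matrix (Fin h1) (Fin c1 ⊕ Fin c2 ⊕ Fin sn ⊕ Fin kn ⊕ Fin w1 ⊕ Fin w2) RF :=
  Matrix.of fun i =>
    Sum.elim 0 (Sum.elim 0 (Sum.elim 0 (Sum.elim (K1 i) (Sum.elim (W1 i) 0))))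

/-- `A₂ = [0 M₂ S₂ 0 0 R₂]` with column blocks `(c₁, c₂, s, k, w₁, w₂)`. -/
def rowA2 (M2 : Matrix (Fin g2) (Fin c2) RF) (S2 : Matrix (Fin g2) (Fin sn) RF)
    (R2 : Matrix (Fin g2) (Fin w2) RF) :
    Matrix (Fin g2) (Fin c1 ⊕ Fin c2 ⊕ Fin sn ⊕ Fin kn ⊕ Fin w1 ⊕ Fin w2) RF :=
  Matrix.of fun i =>
    Sum.elim 0 (Sum.elim (M2 i) (Sum.elim (S2 i) (Sum.elim 0 (Sum.elim 0 (R2 i)))))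

/-- `B₂ = [0 0 0 K₂ 0 W₂]` with column blocks `(c₁, c₂, s, k, w₁, w₂)`. -/
def rowB2 (K2 : Matrix (Fin h2) (Fin kn) RF) (W2 : Matrix (Fin h2) (Fin w2) RF) :
    Matrix (Fin h2) (Fin c1 ⊕ Fin c2 ⊕ Fin sn ⊕ Fin kn ⊕ Fin w1 ⊕ Fin w2) RF :=
  Matrix.of fun i =>
    Sum.elim 0 (Sum.elim 0 (Sum.elim 0 (Sum.elim (K2 i) (Sum.elim 0 (W2 i)))))

/-- `[R₁ M₁ 0 0 S₁]` with column blocks `(w₁, c₁, w₂, c₂, s)`. -/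
def plantRow1 (R1 : Matrix (Fin g1) (Fin w1) RF) (M1 : Matrix (Fin g1) (Fin c1) RF)
    (S1 : Matrix (Fin g1) (Fin sn) RF) :
    Matrix (Fin g1) (Fin w1 ⊕ Fin c1 ⊕ Fin w2 ⊕ Fin c2 ⊕ Fin sn) RF :=
  Matrix.of fun i =>
    Sum.elim (R1 i) (Sum.elim (M1 i) (Sum.elim 0 (Sum.elim 0 (S1 i))))

/-- `[0 0 R₂ M₂ S₂]` with column blocks `(w₁, c₁, w₂, c₂, s)`. -/
def plantRow2 (R2 : Matrix (Fin g2) (Fin w2) RF) (M2 : Matrix (Fin g2) (Fin c2) RF)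
    (S2 : Matrix (Fin g2) (Fin sn) RF) :
    Matrix (Fin g2) (Fin w1 ⊕ Fin c1 ⊕ Fin w2 ⊕ Fin c2 ⊕ Fin sn) RF :=
  Matrix.of fun i =>
    Sum.elim 0 (Sum.elim 0 (Sum.elim (R2 i) (Sum.elim (M2 i) (S2 i))))

/-- `[W₁ 0 K₁]` with column blocks `(w₁, w₂, k)`. -/
def desRow1 (W1 : Matrix (Fin h1) (Fin w1) RF) (K1 : Matrix (Fin h1) (Fin kn) RF) :
    Matrix (Fin h1) (Fin w1 ⊕ Fin w2 ⊕ Fin kn) RF :=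
  Matrix.of fun i => Sum.elim (W1 i) (Sum.elim 0 (K1 i))

/-- `[0 W₂ K₂]` with column blocks `(w₁, w₂, k)`. -/
def desRow2 (W2 : Matrix (Fin h2) (Fin w2) RF) (K2 : Matrix (Fin h2) (Fin kn) RF) :
    Matrix (Fin h2) (Fin w1 ⊕ Fin w2 ⊕ Fin kn) RF :=
  Matrix.of fun i => Sum.elim 0 (Sum.elim (W2 i) (K2 i))

end

/-!
Over a field, `rank [X; Y] = rank X + rank Y` exactly when the row spaces of `X` and `Y` meet
trivially. The row spaces of `A₁` and `B₁` lie in that of `[A₁; B₁]`, and similarly for the second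
pair, so the hypothesis makes the row spaces of `A₁, A₂` and of `B₁, B₂` independent. The plant and
desired-behaviour matrices are `[A₁; A₂]` and `[B₁; B₂]` with their columns reordered and their
zero columns dropped, which changes no rank.
-/

open Module Function

theorem Submodule.finrank_sup_eq_add_iff_disjoint {K V : Type*} [DivisionRing K] [AddCommGroup V]
    [Module K V] (s t : Submodule K V) [FiniteDimensional K s] [FiniteDimensional K t] :
    finrank K ↥(s ⊔ t) = finrank K s + finrank K t ↔ Disjoint s t := by
  rw [disjoint_iff, ← Submodule.finrank_eq_zero, ← s.finrank_sup_add_finrank_inf_eq t]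
  omega

namespace Matrix

section RowSpan

variable {K : Type*} [Field K] {m₁ m₂ m₃ m₄ n : Type*}

theorem span_row_fromRows (A : Matrix m₁ n K) (B : Matrix m₂ n K) :
    Submodule.span K (Set.range (fromRows A B).row) =
      Submodule.span K (Set.range A.row) ⊔ Submodule.span K (Set.range B.row) := by
  rw [← Submodule.span_union, ← Set.Sum.elim_range]
  rfl

variable [Finite m₁] [Finite m₂] [Fintype n]

theorem rank_fromRows_eq_add_iff_disjoint (A : Matrix m₁ n K) (B : Matrix m₂ n K) :
    (fromRows A B).rank = A.rank + B.rank ↔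
      Disjoint (Submodule.span K (Set.range A.row)) (Submodule.span K (Set.range B.row)) := by
  rw [rank_eq_finrank_span_row, rank_eq_finrank_span_row A, rank_eq_finrank_span_row B,
    span_row_fromRows, Submodule.finrank_sup_eq_add_iff_disjoint]

theorem rank_fromRows_eq_add_of_rank_fromRows_fromRows_eq_add [Finite m₃] [Finite m₄]
    (A₁ : Matrix m₁ n K) (A₂ : Matrix m₂ n K) (A₃ : Matrix m₃ n K) (A₄ : Matrix m₄ n K)
    (h : (fromRows (fromRows A₁ A₂) (fromRows A₃ A₄)).rank =
      (fromRows A₁ A₂).rank + (fromRows A₃ A₄).rank) :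
    (fromRows A₁ A₃).rank = A₁.rank + A₃.rank ∧ (fromRows A₂ A₄).rank = A₂.rank + A₄.rank := by
  simp only [rank_fromRows_eq_add_iff_disjoint, span_row_fromRows] at h ⊢
  exact ⟨h.mono le_sup_left le_sup_left, h.mono le_sup_right le_sup_right⟩

end RowSpan

section ZeroCols

variable {R : Type*} [CommRing R] [StrongRankCondition R] {m n n' p : Type*}
  [Fintype n] [Fintype n'] [Fintype p]

theorem rank_fromCols_zero (A : Matrix m n R) : (fromCols A (0 : Matrix m p R)).rank = A.rank := by
  classical
  refine le_antisymm ?_ (rank_submatrix_le (fromCols A 0) id Sum.inl)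
  calc (fromCols A (0 : Matrix m p R)).rank
      = (A * fromCols (1 : Matrix n n R) (0 : Matrix n p R)).rank := by
        rw [Matrix.mul_fromCols, Matrix.mul_one, Matrix.mul_zero]
    _ ≤ A.rank := rank_mul_le_left _ _

theorem rank_eq_of_submatrix_eq_of_submatrix_eq_zero (A : Matrix m n' R) (B : Matrix m n R)
    (f : n → n') (z : p → n') (hf : A.submatrix id f = B) (hz : A.submatrix id z = 0)
    (hfz : Surjective (Sum.elim f z)) : A.rank = B.rank := by
  refine le_antisymm ?_ (hf ▸ rank_submatrix_le A id f)
  calc A.rank = ((A.submatrix id (Sum.elim f z)).submatrix id (surjInv hfz)).rank := by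
        rw [submatrix_submatrix, comp_id, (rightInverse_surjInv hfz).comp_eq_id, submatrix_id_id]
    _ ≤ (A.submatrix id (Sum.elim f z)).rank := rank_submatrix_le _ _ _
    _ = (fromCols B (A.submatrix id z)).rank := by
        rw [← hf]
        congr 1
        ext i (j | j) <;> rfl
    _ = B.rank := by rw [hz, rank_fromCols_zero]

end ZeroCols

end Matrix

section Interconnection

variable {w1 w2 c1 c2 sn kn g1 g2 h1 h2 : ℕ}

abbrev inC1 : Fin c1 → Fin c1 ⊕ Fin c2 ⊕ Fin sn ⊕ Fin kn ⊕ Fin w1 ⊕ Fin w2 := Sum.inl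
abbrev inC2 : Fin c2 → Fin c1 ⊕ Fin c2 ⊕ Fin sn ⊕ Fin kn ⊕ Fin w1 ⊕ Fin w2 := Sum.inr ∘ Sum.inl
abbrev inS : Fin sn → Fin c1 ⊕ Fin c2 ⊕ Fin sn ⊕ Fin kn ⊕ Fin w1 ⊕ Fin w2 :=
  Sum.inr ∘ Sum.inr ∘ Sum.inl
abbrev inK : Fin kn → Fin c1 ⊕ Fin c2 ⊕ Fin sn ⊕ Fin kn ⊕ Fin w1 ⊕ Fin w2 :=
  Sum.inr ∘ Sum.inr ∘ Sum.inr ∘ Sum.inl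
abbrev inW1 : Fin w1 → Fin c1 ⊕ Fin c2 ⊕ Fin sn ⊕ Fin kn ⊕ Fin w1 ⊕ Fin w2 :=
  Sum.inr ∘ Sum.inr ∘ Sum.inr ∘ Sum.inr ∘ Sum.inl
abbrev inW2 : Fin w2 → Fin c1 ⊕ Fin c2 ⊕ Fin sn ⊕ Fin kn ⊕ Fin w1 ⊕ Fin w2 :=
  Sum.inr ∘ Sum.inr ∘ Sum.inr ∘ Sum.inr ∘ Sum.inr

variable (R1 : Matrix (Fin g1) (Fin w1) RF) (M1 : Matrix (Fin g1) (Fin c1) RF)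
  (S1 : Matrix (Fin g1) (Fin sn) RF) (R2 : Matrix (Fin g2) (Fin w2) RF)
  (M2 : Matrix (Fin g2) (Fin c2) RF) (S2 : Matrix (Fin g2) (Fin sn) RF)
  (W1 : Matrix (Fin h1) (Fin w1) RF) (K1 : Matrix (Fin h1) (Fin kn) RF)
  (W2 : Matrix (Fin h2) (Fin w2) RF) (K2 : Matrix (Fin h2) (Fin kn) RF)

theorem rank_rowA1 : (rowA1 (c2 := c2) (kn := kn) (w2 := w2) M1 S1 R1).rank =
    (fromCols (fromCols R1 M1) S1).rank :=
  rank_eq_of_submatrix_eq_of_submatrix_eq_zero _ _ (Sum.elim (Sum.elim inW1 inC1) inS)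
    (Sum.elim inC2 (Sum.elim inK inW2)) (by ext i ((j | j) | j) <;> rfl)
    (by ext i (j | j | j) <;> rfl) (by rintro (j | j | j | j | j | j) <;> simp [Sum.exists])

theorem rank_rowA2 : (rowA2 (c1 := c1) (kn := kn) (w1 := w1) M2 S2 R2).rank =
    (fromCols (fromCols R2 M2) S2).rank :=
  rank_eq_of_submatrix_eq_of_submatrix_eq_zero _ _ (Sum.elim (Sum.elim inW2 inC2) inS)
    (Sum.elim inC1 (Sum.elim inK inW1)) (by ext i ((j | j) | j) <;> rfl)
    (by ext i (j | j | j) <;> rfl) (by rintro (j | j | j | j | j | j) <;> simp [Sum.exists])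

theorem rank_rowB1 : (rowB1 (c1 := c1) (c2 := c2) (sn := sn) (w2 := w2) K1 W1).rank =
    (fromCols W1 K1).rank :=
  rank_eq_of_submatrix_eq_of_submatrix_eq_zero _ _ (Sum.elim inW1 inK)
    (Sum.elim inC1 (Sum.elim inC2 (Sum.elim inS inW2))) (by ext i (j | j) <;> rfl)
    (by ext i (j | j | j | j) <;> rfl) (by rintro (j | j | j | j | j | j) <;> simp [Sum.exists])

theorem rank_rowB2 : (rowB2 (c1 := c1) (c2 := c2) (sn := sn) (w1 := w1) K2 W2).rank =
    (fromCols W2 K2).rank :=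
  rank_eq_of_submatrix_eq_of_submatrix_eq_zero _ _ (Sum.elim inW2 inK)
    (Sum.elim inC1 (Sum.elim inC2 (Sum.elim inS inW1))) (by ext i (j | j) <;> rfl)
    (by ext i (j | j | j | j) <;> rfl) (by rintro (j | j | j | j | j | j) <;> simp [Sum.exists])

theorem rank_fromRows_rowA1_rowA2 :
    (fromRows (rowA1 (c2 := c2) (kn := kn) (w2 := w2) M1 S1 R1)
      (rowA2 (c1 := c1) (kn := kn) (w1 := w1) M2 S2 R2)).rank =
    (fromRows (plantRow1 R1 M1 S1) (plantRow2 R2 M2 S2)).rank :=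
  rank_eq_of_submatrix_eq_of_submatrix_eq_zero _ _
    (Sum.elim inW1 (Sum.elim inC1 (Sum.elim inW2 (Sum.elim inC2 inS)))) inK
    (by ext (i | i) (j | j | j | j | j) <;> rfl) (by ext (i | i) j <;> rfl)
    (by rintro (j | j | j | j | j | j) <;> simp [Sum.exists])

theorem rank_fromRows_rowB1_rowB2 :
    (fromRows (rowB1 (c1 := c1) (c2 := c2) (sn := sn) (w2 := w2) K1 W1)
      (rowB2 (c1 := c1) (c2 := c2) (sn := sn) (w1 := w1) K2 W2)).rank =
    (fromRows (desRow1 (w2 := w2) W1 K1) (desRow2 (w1 := w1) W2 K2)).rank :=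
  rank_eq_of_submatrix_eq_of_submatrix_eq_zero _ _ (Sum.elim inW1 (Sum.elim inW2 inK))
    (Sum.elim inC1 (Sum.elim inC2 inS)) (by ext (i | i) (j | j | j) <;> rfl)
    (by ext (i | i) (j | j | j) <;> rfl) (by rintro (j | j | j | j | j | j) <;> simp [Sum.exists])

end Interconnection

/-- Conversely, rank additivity of the stacked structured matrix (regularity of
the interconnection of the two local canonical controllers) implies the
plant-interconnection and desired-behavior rank (regularity) conditions. -/
theorem statement8 {w1 w2 c1 c2 sn kn g1 g2 h1 h2 : ℕ}
    (R1 : Matrix (Fin g1) (Fin w1) RF) (M1 : Matrix (Fin g1) (Fin c1) RF)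
    (S1 : Matrix (Fin g1) (Fin sn) RF)
    (R2 : Matrix (Fin g2) (Fin w2) RF) (M2 : Matrix (Fin g2) (Fin c2) RF)
    (S2 : Matrix (Fin g2) (Fin sn) RF)
    (W1 : Matrix (Fin h1) (Fin w1) RF) (K1 : Matrix (Fin h1) (Fin kn) RF)
    (W2 : Matrix (Fin h2) (Fin w2) RF) (K2 : Matrix (Fin h2) (Fin kn) RF)
    (hreg : (Matrix.fromRows
        (Matrix.fromRows (rowA1 (c2 := c2) (kn := kn) (w2 := w2) M1 S1 R1)
          (rowB1 (c1 := c1) (c2 := c2) (sn := sn) (w2 := w2) K1 W1))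
        (Matrix.fromRows (rowA2 (c1 := c1) (kn := kn) (w1 := w1) M2 S2 R2)
          (rowB2 (c1 := c1) (c2 := c2) (sn := sn) (w1 := w1) K2 W2))).rank =
      (Matrix.fromRows (rowA1 (c2 := c2) (kn := kn) (w2 := w2) M1 S1 R1)
          (rowB1 (c1 := c1) (c2 := c2) (sn := sn) (w2 := w2) K1 W1)).rank +
        (Matrix.fromRows (rowA2 (c1 := c1) (kn := kn) (w1 := w1) M2 S2 R2)
          (rowB2 (c1 := c1) (c2 := c2) (sn := sn) (w1 := w1) K2 W2)).rank) :
    (Matrix.fromRows (plantRow1 R1 M1 S1) (plantRow2 R2 M2 S2)).rank =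
      (Matrix.fromCols (Matrix.fromCols R1 M1) S1).rank +
        (Matrix.fromCols (Matrix.fromCols R2 M2) S2).rank ∧
    (Matrix.fromRows (desRow1 (w2 := w2) W1 K1) (desRow2 (w1 := w1) W2 K2)).rank =
      (Matrix.fromCols W1 K1).rank + (Matrix.fromCols W2 K2).rank := by
  obtain ⟨hA, hB⟩ := rank_fromRows_eq_add_of_rank_fromRows_fromRows_eq_add _ _ _ _ hreg
  exact ⟨by rw [← rank_fromRows_rowA1_rowA2, hA, rank_rowA1, rank_rowA2],
    by rw [← rank_fromRows_rowB1_rowB2, hB, rank_rowB1, rank_rowB2]⟩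
end
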